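/- Let C be a multiset of real numbers with |C| = n ≥ 3, and let C' = (C − {a}) + {v} be any single-record replacement of C (a ∈ C, v ∈ ℝ). Let P(C') be the preprocessed multiset obtained from C' by replacing one occurrence of its smallest element by its second smallest element and one occurrence of its largest element by its second largest element. Then every element of P(C') lies in the interval [min C, max C]; that is, the modification of a single record keeps all preprocessed cluster values within the range of the original cluster. -/

import Mathlib

/-- The `i`-th smallest element of a multiset of reals (0-indexed). -/
noncomputable def nthSmallest (M : Multiset ℝ) (i : ℕ) : ℝ :=
  (M.sort (· ≤ ·)).getD i 0

/-- The preprocessed multiset `P(M)`: replace one occurrence of the smallest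
value of `M` by the second smallest and one occurrence of the largest value by
the second largest. -/
noncomputable def preprocess (M : Multiset ℝ) : Multiset ℝ :=
  ((M.erase (nthSmallest M 0)).erase (nthSmallest M (M.card - 1)))
    + {nthSmallest M 1, nthSmallest M (M.card - 2)}

/-!
Erasing one copy of the minimum and one of the maximum of `M` leaves only values between its
second smallest and second largest elements, and these are also the two inserted values, so
`P(M)` lies in `[l₁(M), l_{n-2}(M)]`. A single-record replacement `M ≤ C + {v}` has at most one
element (counted with multiplicity) below `min C`, while `l₁(M) < t` would force two elements of
`M` below `t`; hence `min C ≤ l₁(M)`, and symmetrically `l_{n-2}(M) ≤ max C`.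
-/

open Multiset

section nthSmallest

variable {M : Multiset ℝ} {i j : ℕ} {t x : ℝ}

lemma nthSmallest_eq_getElem (hi : i < card M) :
    nthSmallest M i = (M.sort (· ≤ ·))[i]'(by rwa [length_sort]) :=
  List.getD_eq_getElem _ _ _

lemma nthSmallest_mem (hi : i < card M) : nthSmallest M i ∈ M := by
  rw [nthSmallest_eq_getElem hi, ← mem_sort (· ≤ ·)]
  exact List.getElem_mem _

lemma nthSmallest_mono (hij : i ≤ j) (hj : j < card M) :
    nthSmallest M i ≤ nthSmallest M j := by
  rw [nthSmallest_eq_getElem (hij.trans_lt hj), nthSmallest_eq_getElem hj]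
  exact (pairwise_sort M _).rel_get_of_le (a := ⟨i, _⟩) (b := ⟨j, _⟩) hij

lemma exists_nthSmallest_eq (hx : x ∈ M) : ∃ k < card M, nthSmallest M k = x := by
  obtain ⟨k, hk, rfl⟩ := List.mem_iff_getElem.1 ((mem_sort (· ≤ ·)).2 hx)
  rw [length_sort] at hk
  exact ⟨k, hk, nthSmallest_eq_getElem hk⟩

lemma nthSmallest_zero_le (hx : x ∈ M) : nthSmallest M 0 ≤ x := by
  obtain ⟨k, hk, rfl⟩ := exists_nthSmallest_eq hx
  exact nthSmallest_mono k.zero_le hk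

lemma le_nthSmallest_card_sub_one (hx : x ∈ M) : x ≤ nthSmallest M (card M - 1) := by
  obtain ⟨k, hk, rfl⟩ := exists_nthSmallest_eq hx
  exact nthSmallest_mono (by omega) (by omega)

lemma card_filter_sort (p : ℝ → Prop) [DecidablePred p] :
    card (M.filter p) = ((M.sort (· ≤ ·)).filter p).length := by
  conv_lhs => rw [← sort_eq M (· ≤ ·)]
  rw [filter_coe, coe_card]

lemma succ_le_card_filter_lt_of_nthSmallest_lt (hi : i < card M) (ht : nthSmallest M i < t) :
    i + 1 ≤ card (M.filter (· < t)) := by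
  set l := M.sort (· ≤ ·)
  have hlen : l.length = card M := length_sort _
  have htake : (l.take (i + 1)).filter (· < t) = l.take (i + 1) := by
    refine List.filter_eq_self.2 fun y hy => ?_
    obtain ⟨k, hk, rfl⟩ := List.mem_take_iff_getElem.1 hy
    have hki : k ≤ i := by omega
    rw [← nthSmallest_eq_getElem (by omega)]
    simpa using (nthSmallest_mono hki hi).trans_lt ht
  calc i + 1 = (l.take (i + 1)).length := by simp; omega
    _ ≤ (l.filter (· < t)).length := htake ▸ ((List.take_sublist _ _).filter _).length_le
    _ = card (M.filter (· < t)) := (card_filter_sort _).symm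

lemma card_sub_le_card_filter_gt_of_lt_nthSmallest (ht : t < nthSmallest M i) :
    card M - i ≤ card (M.filter (t < ·)) := by
  set l := M.sort (· ≤ ·)
  have hlen : l.length = card M := length_sort _
  have hdrop : (l.drop i).filter (t < ·) = l.drop i := by
    refine List.filter_eq_self.2 fun y hy => ?_
    obtain ⟨k, hk, rfl⟩ := List.mem_drop_iff_getElem.1 hy
    rw [← nthSmallest_eq_getElem (by omega)]
    simpa using ht.trans_le (nthSmallest_mono (by omega) (by omega))
  calc card M - i = (l.drop i).length := by simp [hlen]
    _ ≤ (l.filter (t < ·)).length := hdrop ▸ ((List.drop_sublist _ _).filter _).length_le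
    _ = card (M.filter (t < ·)) := (card_filter_sort _).symm

end nthSmallest

lemma Multiset.card_filter_le_one_of_le_add_singleton {α : Type*} {M C : Multiset α} {v : α}
    {p : α → Prop} [DecidablePred p] (hM : M ≤ C + {v}) (hC : ∀ y ∈ C, ¬ p y) :
    card (M.filter p) ≤ 1 :=
  calc card (M.filter p) ≤ card ((C + {v}).filter p) := card_le_card (filter_le_filter p hM)
    _ ≤ 1 := by
      rw [filter_add, filter_eq_nil.2 hC, zero_add, ← card_singleton v]
      exact card_le_card (filter_le p _)

lemma Multiset.two_le_card_filter_of_mem_erase {α : Type*} [DecidableEq α] {M : Multiset α}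
    {x y : α} {p : α → Prop} [DecidablePred p] (hy : y ∈ M) (hx : x ∈ M.erase y) (hpy : p y)
    (hpx : p x) : 2 ≤ card (M.filter p) :=
  calc 2 = card ((y ::ₘ {x}).filter p) := by simp [filter_singleton, hpy, hpx]
    _ ≤ card (M.filter p) :=
      card_le_card (filter_le_filter p (cons_erase hy ▸ cons_le_cons y (singleton_le.2 hx)))

section preprocess

variable {M : Multiset ℝ} {t x : ℝ}

lemma le_of_mem_preprocess (hM : 3 ≤ card M) (ht : card (M.filter (· < t)) ≤ 1)
    (hx : x ∈ preprocess M) : t ≤ x := by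
  have hsecond : t ≤ nthSmallest M 1 := not_lt.1 fun h => by
    have := succ_le_card_filter_lt_of_nthSmallest_lt (by omega) h
    omega
  rw [preprocess, mem_add, insert_eq_cons, mem_cons, mem_singleton] at hx
  rcases hx with hx | rfl | rfl
  · by_contra! hxt
    replace hx := mem_of_mem_erase hx
    have := two_le_card_filter_of_mem_erase (p := (· < t)) (nthSmallest_mem (by omega)) hx
      ((nthSmallest_zero_le (mem_of_mem_erase hx)).trans_lt hxt) hxt
    omega
  · exact hsecond
  · exact hsecond.trans (nthSmallest_mono (by omega) (by omega))

lemma ge_of_mem_preprocess (hM : 3 ≤ card M) (ht : card (M.filter (t < ·)) ≤ 1)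
    (hx : x ∈ preprocess M) : x ≤ t := by
  have hpenult : nthSmallest M (card M - 2) ≤ t := not_lt.1 fun h => by
    have := card_sub_le_card_filter_gt_of_lt_nthSmallest h
    omega
  rw [preprocess, mem_add, insert_eq_cons, mem_cons, mem_singleton, erase_comm] at hx
  rcases hx with hx | rfl | rfl
  · by_contra! hxt
    replace hx := mem_of_mem_erase hx
    have := two_le_card_filter_of_mem_erase (p := (t < ·)) (nthSmallest_mem (by omega)) hx
      (hxt.trans_le (le_nthSmallest_card_sub_one (mem_of_mem_erase hx))) hxt
    omega
  · exact (nthSmallest_mono (by omega) (by omega)).trans hpenult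
  · exact hpenult

end preprocess

theorem preprocess_mem_range_general (C : Multiset ℝ) (n : ℕ) (hn : 3 ≤ n)
    (hcard : C.card = n) (a : ℝ) (v : ℝ) :
    ∀ x ∈ preprocess (C.erase a + {v}),
      nthSmallest C 0 ≤ x ∧ x ≤ nthSmallest C (n - 1) := by
  intro x hx
  subst hcard
  have hle : C.erase a + {v} ≤ C + {v} := add_le_add_left (erase_le a C) _
  have hcard : 3 ≤ card (C.erase a + {v}) := by
    simpa using hn.trans (card_le_card (le_cons_erase C a))
  exact ⟨le_of_mem_preprocess hcard (card_filter_le_one_of_le_add_singleton hle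
      fun _ hy => (nthSmallest_zero_le hy).not_gt) hx,
    ge_of_mem_preprocess hcard (card_filter_le_one_of_le_add_singleton hle
      fun _ hy => (le_nthSmallest_card_sub_one hy).not_gt) hx⟩

/-- Modifying a single record of `C` keeps all values of the preprocessed
cluster within the range `[min C, max C]` of the original cluster. -/
theorem preprocess_mem_range (C : Multiset ℝ) (n : ℕ) (hn : 3 ≤ n)
    (hcard : C.card = n) (a : ℝ) (ha : a ∈ C) (v : ℝ) :
    ∀ x ∈ preprocess (C.erase a + {v}),
      nthSmallest C 0 ≤ x ∧ x ≤ nthSmallest C (n - 1) :=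
  preprocess_mem_range_general C n hn hcard a v
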